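/- Let d ≥ 1, let K be a convex subset of ℝ^d, let Δ ∈ ℝ, and let H = {y ∈ ℝ^d : y_d ≥ −Δ} where y_d = ⟨y, e_d⟩. Let x ∈ K ∩ H with x_d > −Δ, and let v ∈ ℝ^d be such that ⟨y, v⟩ ≤ ⟨x, v⟩ for all y ∈ K ∩ H. Then ⟨y, v⟩ ≤ ⟨x, v⟩ for all y ∈ K. -/
import Mathlib


open scoped RealInnerProductSpace

/-- A supporting functional of `K ∩ {y_d ≥ −Δ}` at a point lying strictly above the
cutting hyperplane is also a supporting functional of `K`. -/
theorem supporting_hyperplane_above_cut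
    (d : ℕ) (hd : 1 ≤ d)
    (K : Set (EuclideanSpace ℝ (Fin d))) (hKconv : Convex ℝ K)
    (e : EuclideanSpace ℝ (Fin d))
    (he : e = EuclideanSpace.single (⟨d - 1, by omega⟩ : Fin d) (1 : ℝ))
    (Δ : ℝ)
    (x : EuclideanSpace ℝ (Fin d))
    (hxK : x ∈ K) (hxH : -Δ ≤ ⟪x, e⟫) (hxstrict : -Δ < ⟪x, e⟫)
    (v : EuclideanSpace ℝ (Fin d))
    (hsupp : ∀ y ∈ K, -Δ ≤ ⟪y, e⟫ → ⟪y, v⟫ ≤ ⟪x, v⟫) :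
    ∀ y ∈ K, ⟪y, v⟫ ≤ ⟪x, v⟫ := by
  intro y hyK
  by_cases hy : -Δ ≤ ⟪y, e⟫
  · exact hsupp y hyK hy
  push_neg at hy
  set a : ℝ := ⟪x, e⟫ + Δ with ha
  set b : ℝ := -Δ - ⟪y, e⟫ with hb
  have hapos : 0 < a := by rw [ha]; linarith
  have hbpos : 0 < b := by rw [hb]; linarith
  have habpos : 0 < a + b := by linarith
  set t : ℝ := a / (a + b) with ht
  have htpos : 0 < t := div_pos hapos habpos
  have htlt : t < 1 := by
    rw [ht, div_lt_one habpos]; linarith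
  set z := (1 - t) • x + t • y with hz
  have hzK : z ∈ K := hKconv hxK hyK (by linarith) (le_of_lt htpos) (by ring)
  have hze : ⟪z, e⟫ = -Δ := by
    have : ⟪z, e⟫ = (1 - t) * ⟪x, e⟫ + t * ⟪y, e⟫ := by
      rw [hz, inner_add_left, real_inner_smul_left, real_inner_smul_left]
    have h1 : ⟪x, e⟫ = a - Δ := by rw [ha]; ring
    have h2 : ⟪y, e⟫ = -Δ - b := by rw [hb]; ring
    rw [this, h1, h2, ht]
    field_simp
    ring
  have hzv : ⟪z, v⟫ ≤ ⟪x, v⟫ := hsupp z hzK (le_of_eq hze.symm)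
  have hzv' : ⟪z, v⟫ = (1 - t) * ⟪x, v⟫ + t * ⟪y, v⟫ := by
    rw [hz, inner_add_left, real_inner_smul_left, real_inner_smul_left]
  nlinarith [hzv, hzv', htpos]
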